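/- Suppose P : α → β is injective. Then for any set D, filter F, element y, and set A with y ∉ A, the equation {P x | x ∈ D ∧ F x} = insert y A holds if and only if there exist d and E such that D = insert d E with d ∉ E, F d holds, y = P d, and {P x | x ∈ E ∧ F x} = A. -/
import Mathlib


theorem ris_var_eq_insert {α β : Type*} (P : α → β) (hP : Function.Injective P)
    (D : Set α) (F : α → Prop) (y : β) (A : Set β) (hy : y ∉ A) :
    P '' {x ∈ D | F x} = insert y A ↔
      ∃ d E, D = insert d E ∧ d ∉ E ∧ F d ∧ y = P d ∧
        P '' {x ∈ E | F x} = A := by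
  constructor
  · intro h
    have hyim : y ∈ P '' {x ∈ D | F x} := by rw [h]; exact Set.mem_insert _ _
    obtain ⟨d, ⟨hdD, hdF⟩, hPd⟩ := hyim
    refine ⟨d, D \ {d}, ?_, by simp, hdF, hPd.symm, ?_⟩
    · rw [Set.insert_diff_singleton, Set.insert_eq_self.mpr hdD]
    · ext b
      constructor
      · rintro ⟨x, ⟨⟨hxD, hxd⟩, hxF⟩, rfl⟩
        have : P x ∈ insert y A := by rw [← h]; exact ⟨x, ⟨hxD, hxF⟩, rfl⟩
        rcases this with h1 | h1
        · exact absurd (hP (h1.trans hPd.symm) ▸ rfl : x ∈ ({d} : Set α)) hxd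
        · exact h1
      · intro hb
        have : b ∈ insert y A := Set.mem_insert_of_mem _ hb
        rw [← h] at this
        obtain ⟨x, ⟨hxD, hxF⟩, rfl⟩ := this
        refine ⟨x, ⟨⟨hxD, ?_⟩, hxF⟩, rfl⟩
        rintro rfl
        exact hy (by rwa [hPd] at hb)
  · rintro ⟨d, E, rfl, hdE, hFd, rfl, rfl⟩
    ext b
    simp only [Set.mem_image, Set.mem_insert_iff, Set.mem_setOf_eq]
    constructor
    · rintro ⟨x, ⟨hx | hx, hxF⟩, rfl⟩
      · left; rw [hx]
      · right; exact ⟨x, ⟨hx, hxF⟩, rfl⟩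
    · rintro (rfl | ⟨x, ⟨hx, hxF⟩, rfl⟩)
      · exact ⟨d, ⟨Or.inl rfl, hFd⟩, rfl⟩
      · exact ⟨x, ⟨Or.inr hx, hxF⟩, rfl⟩
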